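/- arXiv:2112.09189 — 4 statements merged into one kernel-verified Lean document; each statement's English description precedes it below -/
import Mathlib

section
/- For m = n + 2d + 1 and any A ∈ Ď(m,d), the tuples π(A) and π(A + (1,1,…,1)) are intertwining elements of the set of d-arcs, i.e. π(A) ⋏ π(A + 1̄), where 1̄ = (1,…,1). -/
/-- `Dset m d A`: the set Ď(m,d) of (d+1)-tuples of integers with consecutive
gaps ≥ 2, cyclically (a_d + 2 ≤ a_0 + m). -/
def Dset (m d : ℕ) (A : Fin (d+1) → ℤ) : Prop :=
  (∀ i : Fin d, A i.castSucc + 2 ≤ A i.succ) ∧ A (Fin.last d) + 2 ≤ A 0 + (m : ℤ)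

/-- Reduction mod m with representatives in {1, …, m}. -/
def pimod (m : ℕ) (a : ℤ) : ℤ := (a - 1) % (m : ℤ) + 1

/-- Intertwining X ⋏ Y of two (d+1)-tuples regarded as cyclically ordered
d-simplices with entries mod m: for some cyclic shift l of the order on [m] and
cyclic rotations p, q of the index sets, the entries interleave strictly:
x_0 <_l y_0 <_l x_1 <_l ⋯ <_l x_d <_l y_d. -/
def Intertw (m d : ℕ) (X Y : Fin (d+1) → ℤ) : Prop :=
  ∃ l : ℤ, ∃ p q : Fin (d+1),
    (∀ i : Fin (d+1), (X (i + p) - l) % (m : ℤ) < (Y (i + q) - l) % (m : ℤ)) ∧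
    (∀ i : Fin d, (Y (i.castSucc + q) - l) % (m : ℤ) < (X (i.succ + p) - l) % (m : ℤ))


lemma pimod_sub_emod (m : ℕ) (a l : ℤ) :
    (pimod m a - l) % (m : ℤ) = (a - l) % (m : ℤ) := by
  unfold pimod
  rw [show (a - 1) % (m : ℤ) = a - 1 - (m : ℤ) * ((a - 1) / (m : ℤ)) from Int.emod_def _ _]
  have h : a - 1 - (m : ℤ) * ((a - 1) / (m : ℤ)) + 1 - l
      = (a - l) + (m : ℤ) * (-((a - 1) / (m : ℤ))) := by ring
  rw [h, Int.add_mul_emod_self_left]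

/-- For any A ∈ Ď(n+2d+1, d), the d-arcs π(A) and π(A + (1,…,1))
are intertwining: π(A) ⋏ π(A + 1̄). -/
theorem pimod_intertw_succ (n d : ℕ) (A : Fin (d+1) → ℤ)
    (hA : Dset (n + 2*d + 1) d A) :
    Intertw (n + 2*d + 1) d (fun i => pimod (n + 2*d + 1) (A i))
      (fun i => pimod (n + 2*d + 1) (A i + 1)) := by
  classical
  set m : ℕ := n + 2*d + 1 with hm
  have hmono : StrictMono A := by
    refine Fin.strictMono_iff_lt_succ.mpr (fun i => ?_)
    have := hA.1 i; omega
  have h0 : ∀ i : Fin (d+1), A 0 ≤ A i := fun i => hmono.monotone (Fin.zero_le i)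
  have hl : ∀ i : Fin (d+1), A i ≤ A (Fin.last d) := fun i => hmono.monotone (Fin.le_last i)
  have hub : ∀ i : Fin (d+1), A i + 1 - A 0 < (m : ℤ) := by
    intro i
    have h1 := hl i
    have h2 := hA.2
    omega
  refine ⟨A 0, 0, 0, ?_, ?_⟩
  · intro i
    simp only [add_zero, pimod_sub_emod]
    rw [Int.emod_eq_of_lt (by have := h0 i; omega) (by have := hub i; omega),
        Int.emod_eq_of_lt (by have := h0 i; omega) (by have := hub i; omega)]
    omega
  · intro i
    simp only [add_zero, pimod_sub_emod]
    have hgap := hA.1 i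
    have h0c := h0 i.castSucc
    have hubc := hub i.castSucc
    have h0s := h0 i.succ
    have hubs := hub i.succ
    rw [Int.emod_eq_of_lt (by omega) (by omega),
        Int.emod_eq_of_lt (by omega) (by omega)]
    omega
end

section
/- Let P be a switching-closed full subquiver of Q̃^{(d,n)}: whenever A → A+E_i → A+E_i+E_j is a path in P and A+E_j is a vertex of Q̃^{(d,n)}, the path A → A+E_j → A+E_i+E_j also lies in P. If there is a directed path from A to B in P, then every directed path from A to B in Q̃^{(d,n)} lies entirely in P. -/
/-- i-th standard basis vector of ℤ^{d+1}. -/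
def Evec (d : ℕ) (i : Fin (d+1)) : Fin (d+1) → ℤ := fun j => if j = i then 1 else 0

/-- Arrows of the quiver Q̃^{(d,n)} (with m = n + 2d + 1): A → A + E_i whenever
both endpoints are vertices. -/
def TArrow (m d : ℕ) (A B : Fin (d+1) → ℤ) : Prop :=
  Dset m d A ∧ Dset m d B ∧ ∃ i : Fin (d+1), B = A + Evec d i

/-- A full subquiver (given by its vertex set P) of Q̃^{(d,n)} is switching-closed:
whenever A → A+E_i → A+E_i+E_j lies in P and A+E_j is a vertex of Q̃^{(d,n)},
the path A → A+E_j → A+E_i+E_j also lies in P. -/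
def SwitchClosed (m d : ℕ) (P : Set (Fin (d+1) → ℤ)) : Prop :=
  ∀ (A : Fin (d+1) → ℤ) (i j : Fin (d+1)),
    A ∈ P → A + Evec d i ∈ P → A + Evec d i + Evec d j ∈ P →
    Dset m d (A + Evec d j) → A + Evec d j ∈ P

lemma evec_apply_self {d : ℕ} (i : Fin (d+1)) : Evec d i i = 1 := if_pos rfl

lemma evec_apply_of_ne {d : ℕ} {i j : Fin (d+1)} (h : j ≠ i) : Evec d i j = 0 := if_neg h

lemma le_add_evec_add_evec {d : ℕ} {A : Fin (d+1) → ℤ} {i j a b : Fin (d+1)}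
    (hij : i ≠ j) (c : ℤ)
    (hA : A a + 2 ≤ A b + c)
    (hi : (A + Evec d i) a + 2 ≤ (A + Evec d i) b + c)
    (hj : (A + Evec d j) a + 2 ≤ (A + Evec d j) b + c) :
    (A + Evec d i + Evec d j) a + 2 ≤ (A + Evec d i + Evec d j) b + c := by
  simp only [Pi.add_apply, Evec] at *
  by_cases hai : a = i <;> by_cases haj : a = j <;>
    by_cases hbi : b = i <;> by_cases hbj : b = j <;>
    simp_all <;> omega

lemma Dset.add_evec_add_evec {m d : ℕ} {A : Fin (d+1) → ℤ} {i j : Fin (d+1)}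
    (hA : Dset m d A) (hi : Dset m d (A + Evec d i)) (hj : Dset m d (A + Evec d j))
    (hij : i ≠ j) : Dset m d (A + Evec d i + Evec d j) :=
  ⟨fun k => by
    simpa using le_add_evec_add_evec hij 0 (by simpa using hA.1 k) (by simpa using hi.1 k)
      (by simpa using hj.1 k),
   le_add_evec_add_evec hij m hA.2 hi.2 hj.2⟩

section Paths

variable {m d : ℕ}

lemma apply_le_of_reflTransGen {X Y : Fin (d+1) → ℤ}
    (h : Relation.ReflTransGen (TArrow m d) X Y) (i : Fin (d+1)) : X i ≤ Y i := by
  induction h with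
  | refl => exact le_rfl
  | tail _ hstep ih =>
      obtain ⟨-, -, k, rfl⟩ := hstep
      have : 0 ≤ Evec d k i := by unfold Evec; split <;> omega
      simp only [Pi.add_apply]
      omega

lemma lt_of_reflTransGen_add_evec {X Y : Fin (d+1) → ℤ} {i : Fin (d+1)}
    (h : Relation.ReflTransGen (TArrow m d) (X + Evec d i) Y) : X i < Y i := by
  have := apply_le_of_reflTransGen h i
  simp only [Pi.add_apply, evec_apply_self] at this
  omega

lemma reflTransGen_add_evec_of_lt {Y B : Fin (d+1) → ℤ} {i : Fin (d+1)}
    (h : Relation.ReflTransGen (TArrow m d) Y B) (hYi : Dset m d (Y + Evec d i))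
    (hlt : Y i < B i) : Relation.ReflTransGen (TArrow m d) (Y + Evec d i) B := by
  induction h using Relation.ReflTransGen.head_induction_on with
  | refl => exact absurd hlt (lt_irrefl _)
  | @head Y _ hstep hZB ih =>
      obtain ⟨hY, hZ, k, rfl⟩ := hstep
      by_cases hk : k = i
      · subst hk
        exact hZB
      · have hsq := hY.add_evec_add_evec hZ hYi hk
        have hZi : (Y + Evec d k) i = Y i := by
          simp [evec_apply_of_ne (Ne.symm hk)]
        exact .head ⟨hYi, hsq, k, add_right_comm _ _ _⟩ (ih hsq (hZi ▸ hlt))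

variable {P : Set (Fin (d+1) → ℤ)}

lemma add_evec_mem_of_switchClosed (hsw : SwitchClosed m d P) {A B : Fin (d+1) → ℤ}
    (hpath : Relation.ReflTransGen (fun X Y => X ∈ P ∧ Y ∈ P ∧ TArrow m d X Y) A B)
    {i : Fin (d+1)} (hAi : Dset m d (A + Evec d i))
    (hAiB : Relation.ReflTransGen (TArrow m d) (A + Evec d i) B) :
    A + Evec d i ∈ P ∧ Relation.ReflTransGen
      (fun X Y => X ∈ P ∧ Y ∈ P ∧ TArrow m d X Y) (A + Evec d i) B := by
  induction hpath using Relation.ReflTransGen.head_induction_on generalizing i with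
  | refl => exact absurd (lt_of_reflTransGen_add_evec hAiB) (lt_irrefl _)
  | @head A _ hstep hCB ih =>
      obtain ⟨hA, hC, hdA, hdC, j, rfl⟩ := hstep
      by_cases hij : i = j
      · subst hij
        exact ⟨hC, hCB⟩
      · have hsq := hdA.add_evec_add_evec hdC hAi (Ne.symm hij)
        have hCi : (A + Evec d j) i = A i := by simp [evec_apply_of_ne hij]
        have hCB' : Relation.ReflTransGen (TArrow m d) (A + Evec d j) B :=
          Relation.ReflTransGen.mono (fun _ _ h => h.2.2) _ _ hCB
        have hCiB := reflTransGen_add_evec_of_lt hCB' hsq (hCi ▸ lt_of_reflTransGen_add_evec hAiB)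
        obtain ⟨hCiP, hCiB'⟩ := ih hsq hCiB
        have hAiP : A + Evec d i ∈ P := hsw A j i hA hC hCiP hAi
        exact ⟨hAiP, .head ⟨hAiP, hCiP, hAi, hsq, j, add_right_comm _ _ _⟩ hCiB'⟩

end Paths

theorem all_paths_in_switching_closed_general (n d : ℕ) (P : Set (Fin (d+1) → ℤ))
    (hsw : SwitchClosed (n + 2*d + 1) d P)
    (A B : Fin (d+1) → ℤ) (hA : A ∈ P)
    (hpath : Relation.ReflTransGen
      (fun X Y => X ∈ P ∧ Y ∈ P ∧ TArrow (n + 2*d + 1) d X Y) A B) :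
    ∀ X, Relation.ReflTransGen (TArrow (n + 2*d + 1) d) A X →
      Relation.ReflTransGen (TArrow (n + 2*d + 1) d) X B → X ∈ P := by
  intro X hAX
  suffices Relation.ReflTransGen (TArrow (n + 2*d + 1) d) X B → X ∈ P ∧
      Relation.ReflTransGen (fun X Y => X ∈ P ∧ Y ∈ P ∧ TArrow (n + 2*d + 1) d X Y) X B from
    fun hXB => (this hXB).1
  induction hAX with
  | refl => exact fun _ => ⟨hA, hpath⟩
  | tail _ hstep ih =>
      intro hXB
      obtain ⟨hdY, hdX, i, rfl⟩ := hstep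
      exact add_evec_mem_of_switchClosed hsw (ih (.head ⟨hdY, hdX, i, rfl⟩ hXB)).2 hdX hXB

/-- If P is a switching-closed full subquiver of Q̃^{(d,n)} and there
is a directed path from A to B in P, then every directed path from A to B in
Q̃^{(d,n)} lies entirely in P (i.e. every vertex X on such a path lies in P). -/
theorem all_paths_in_switching_closed (n d : ℕ) (P : Set (Fin (d+1) → ℤ))
    (hP : ∀ X ∈ P, Dset (n + 2*d + 1) d X)
    (hsw : SwitchClosed (n + 2*d + 1) d P)
    (A B : Fin (d+1) → ℤ) (hA : A ∈ P) (hB : B ∈ P)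
    (hpath : Relation.ReflTransGen
      (fun X Y => X ∈ P ∧ Y ∈ P ∧ TArrow (n + 2*d + 1) d X Y) A B) :
    ∀ X, Relation.ReflTransGen (TArrow (n + 2*d + 1) d) A X →
      Relation.ReflTransGen (TArrow (n + 2*d + 1) d) X B → X ∈ P :=
  all_paths_in_switching_closed_general n d P hsw A B hA hpath
end

section
/- Let S be a slice of Q̃^{(d,n)}, i.e. a full subquiver meeting each ν_d-orbit exactly once (ν_d : A ↦ A − (1,…,1)) and convex. Then the image π(S_0) ⊂ N(n+2d+1, d) is a pairwise non-intertwining collection of d-simplices of cardinality equal to the number of ν_d-orbits, and hence gives a triangulation of the cyclic polytope C(n+2d+1, 2d). -/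
/-- The ν_d-orbit equivalence on the vertices of Q̃^{(d,n)} (ν_d : A ↦ A - (1,…,1)):
A ~ B iff B = A + k·(1,…,1) for some k ∈ ℤ. -/
def nuSetoid (m d : ℕ) : Setoid {A : Fin (d+1) → ℤ // Dset m d A} where
  r A B := ∃ k : ℤ, ∀ j, B.1 j = A.1 j + k
  iseqv := by
    refine ⟨fun A => ⟨0, by simp⟩, ?_, ?_⟩
    · rintro A B ⟨k, h⟩
      exact ⟨-k, fun j => by rw [h j]; ring⟩
    · rintro A B C ⟨k, h⟩ ⟨k', h'⟩
      exact ⟨k + k', fun j => by rw [h' j, h j]; ring⟩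

/-!
Lift a vertex `A` to `Â = cyclicLift m d A : ℤ → ℤ`, `Â (j + (d+1) k) = A j + m k`, a strictly
increasing map whose image is the preimage in `ℤ` of `π(A)`. If `π(A)` and `π(B)` intertwine,
the images of `Â` and `B̂` interleave, so `Â t < B̂ (t + c) < Â (t + 1)` for a fixed offset `c`,
and according to the sign of `c` either `A < B` or `B < A` in every coordinate. No two vertices
of a slice are comparable in this way: for `m ≥ 2d + 3` every coordinatewise inequality between
vertices is realised by a path of arrows, so `A < B` would put `A + (1,…,1)`, which lies in the
`ν_d`-orbit of `A`, into the slice by convexity; for `m = 2d + 2` all vertices form a single orbit.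
The cardinality statement is the bijection between the slice and the set of orbits.
-/

open Finset Relation

lemma exists_eq_val_add_mul (d : ℕ) (t : ℤ) :
    ∃ (j : Fin (d+1)) (k : ℤ), t = j + (d+1) * k := by
  have hpos : (0:ℤ) < d+1 := by omega
  refine ⟨⟨(t % (d+1)).toNat, by have := Int.emod_lt_of_pos t hpos; omega⟩, t / (d+1), ?_⟩
  have := Int.emod_nonneg t hpos.ne'
  have := Int.emod_add_mul_ediv t (d+1)
  simp only
  omega

section

variable {m d : ℕ}

def cyclicLift (m d : ℕ) (A : Fin (d+1) → ℤ) (t : ℤ) : ℤ :=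
  A ⟨(t % (d+1)).toNat, by have := Int.emod_lt_of_pos t (by omega : (0:ℤ) < d+1); omega⟩ +
    m * (t / (d+1))

section cyclicLift

variable (A : Fin (d+1) → ℤ)

lemma cyclicLift_val_add_mul (j : Fin (d+1)) (k : ℤ) :
    cyclicLift m d A (j + (d+1) * k) = A j + m * k := by
  have hj : ((j : ℤ) + (d+1) * k) % (d+1) = j := by
    rw [Int.add_mul_emod_self_left]; exact Int.emod_eq_of_lt (by omega) (by omega)
  have hk : ((j : ℤ) + (d+1) * k) / (d+1) = k := by
    rw [Int.add_mul_ediv_left _ _ (by omega), Int.ediv_eq_zero_of_lt (by omega) (by omega),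
      zero_add]
  simp only [cyclicLift, hj, hk, Int.toNat_natCast, Fin.eta]

lemma cyclicLift_val (j : Fin (d+1)) : cyclicLift m d A j = A j := by
  simpa using cyclicLift_val_add_mul A j 0

lemma cyclicLift_add_mul (t k : ℤ) :
    cyclicLift m d A (t + (d+1) * k) = cyclicLift m d A t + m * k := by
  obtain ⟨j, k', rfl⟩ := exists_eq_val_add_mul d t
  rw [add_assoc, ← mul_add, cyclicLift_val_add_mul, cyclicLift_val_add_mul]
  ring

end cyclicLift

lemma pimod_modEq (m : ℕ) (a : ℤ) : pimod m a ≡ a [ZMOD m] := by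
  simpa [pimod] using (Int.mod_modEq (a - 1) m).add_right 1

namespace Dset

variable {A B : Fin (d+1) → ℤ}

lemma cyclicLift_add_one (hA : Dset m d A) (t : ℤ) :
    cyclicLift m d A t + 2 ≤ cyclicLift m d A (t + 1) := by
  obtain ⟨j, k, rfl⟩ := exists_eq_val_add_mul d t
  rw [cyclicLift_val_add_mul]
  cases j using Fin.lastCases with
  | last =>
    have := cyclicLift_val_add_mul (m := m) A 0 (k + 1)
    rw [show ((Fin.last d : ℕ) : ℤ) + (d+1) * k + 1 = ((0 : Fin (d+1)) : ℕ) + (d+1) * (k+1) by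
      simp only [Fin.val_last, Fin.val_zero, Nat.cast_zero]; ring, this]
    linarith [hA.2]
  | cast i =>
    have := cyclicLift_val_add_mul (m := m) A i.succ k
    rw [show ((i.castSucc : ℕ) : ℤ) + (d+1) * k + 1 = (i.succ : ℕ) + (d+1) * k by
      simp only [Fin.val_castSucc, Fin.val_succ, Nat.cast_succ]; ring, this]
    linarith [hA.1 i]

lemma add_two_mul_le_cyclicLift (hA : Dset m d A) (t : ℤ) (k : ℕ) :
    cyclicLift m d A t + 2 * k ≤ cyclicLift m d A (t + k) := by
  induction k with
  | zero => simp
  | succ k ih =>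
    have := hA.cyclicLift_add_one (t + k)
    push_cast
    rw [← add_assoc]
    linarith

lemma strictMono_cyclicLift (hA : Dset m d A) : StrictMono (cyclicLift m d A) :=
  strictMono_int_of_lt_succ fun t => by linarith [hA.cyclicLift_add_one t]

lemma pos (hA : Dset m d A) : 0 < m := by
  have := hA.strictMono_cyclicLift (show (0 : ℤ) < 0 + (d+1) * 1 by omega)
  rw [cyclicLift_add_mul] at this
  omega

lemma eq_add_two_mul (hA : Dset m d A) (hm : m ≤ 2 * d + 2) (j : Fin (d+1)) :
    A j = A 0 + 2 * j := by
  have lower := hA.add_two_mul_le_cyclicLift 0 j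
  have upper := hA.add_two_mul_le_cyclicLift j (d + 1 - j)
  have wrap := cyclicLift_val_add_mul (m := m) A 0 1
  have hj : ((d + 1 - j : ℕ) : ℤ) = d + 1 - j := by have := j.is_lt; omega
  rw [hj, show (j : ℤ) + (d + 1 - j) = ((0 : Fin (d+1)) : ℕ) + (d+1) * 1 by simp] at upper
  have h0 : cyclicLift m d A 0 = A 0 := by simpa using cyclicLift_val (m := m) A 0
  rw [zero_add, cyclicLift_val, h0] at lower
  rw [cyclicLift_val, wrap] at upper
  have : (m : ℤ) ≤ 2 * d + 2 := by exact_mod_cast hm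
  linarith

lemma add_const (hA : Dset m d A) (c : ℤ) : Dset m d (fun j => A j + c) :=
  ⟨fun i => by linarith [hA.1 i], by linarith [hA.2]⟩

lemma add_Evec (hA : Dset m d A) (i : Fin (d+1))
    (h : cyclicLift m d A i + 3 ≤ cyclicLift m d A (i + 1)) : Dset m d (A + Evec d i) := by
  rw [cyclicLift_val] at h
  have hsucc : ∀ k : Fin d, k.castSucc = i → A i + 3 ≤ A k.succ := by
    rintro k rfl
    rwa [show ((k.castSucc : ℕ) : ℤ) + 1 = (k.succ : ℕ) by simp, cyclicLift_val] at h
  have hlast : i = Fin.last d → A i + 3 ≤ A 0 + m := by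
    rintro rfl
    rw [show ((Fin.last d : ℕ) : ℤ) + 1 = ((0 : Fin (d+1)) : ℕ) + (d+1) * 1 by simp,
      cyclicLift_val_add_mul, mul_one] at h
    exact h
  refine ⟨fun k => ?_, ?_⟩
  · by_cases hk : k.castSucc = i
    · subst hk
      have hne : k.succ ≠ k.castSucc := Fin.castSucc_lt_succ.ne'
      simp only [Pi.add_apply, Evec, if_true, if_neg hne]
      linarith [hsucc k rfl]
    · simp only [Pi.add_apply, Evec, if_neg hk]
      split_ifs <;> linarith [hA.1 k]
  · by_cases hi : Fin.last d = i
    · subst hi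
      simp only [Pi.add_apply, Evec]
      split_ifs <;> linarith [hlast rfl, hA.2]
    · simp only [Pi.add_apply, Evec, if_neg hi]
      split_ifs <;> linarith [hA.2]

lemma exists_slack (hm : 2 * d + 3 ≤ m) (hA : Dset m d A) (hB : Dset m d B)
    (h : ∃ j, A j < B j) :
    ∃ i : Fin (d+1), A i < B i ∧ cyclicLift m d A i + 3 ≤ cyclicLift m d A (i + 1) := by
  suffices ∃ t, cyclicLift m d A t < cyclicLift m d B t ∧
      cyclicLift m d A t + 3 ≤ cyclicLift m d A (t + 1) by
    obtain ⟨t, hlt, hslack⟩ := this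
    obtain ⟨i, k, rfl⟩ := exists_eq_val_add_mul d t
    refine ⟨i, ?_, ?_⟩
    · simpa [cyclicLift_val_add_mul] using hlt
    · rw [add_right_comm, cyclicLift_add_mul, cyclicLift_add_mul] at hslack
      linarith
  -- otherwise a deficient coordinate propagates around the cycle with all gaps equal to 2
  by_contra! hno
  obtain ⟨j, hj⟩ := h
  have tight : ∀ k : ℕ, cyclicLift m d A (j + k) < cyclicLift m d B (j + k) ∧
      cyclicLift m d A (j + k) = A j + 2 * k := by
    intro k
    induction k with
    | zero => simpa [cyclicLift_val] using hj
    | succ k ih =>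
      have := hno _ ih.1
      have := hA.cyclicLift_add_one (j + k)
      have := hB.cyclicLift_add_one (j + k)
      push_cast
      rw [← add_assoc]
      constructor <;> linarith
  have := (tight (d + 1)).2
  rw [show (j : ℤ) + ((d + 1 : ℕ) : ℤ) = j + (d+1) * 1 by push_cast; ring,
    cyclicLift_val_add_mul] at this
  have : (2 * d + 3 : ℤ) ≤ m := by exact_mod_cast hm
  push_cast at *
  linarith

lemma reflTransGen_tArrow_of_le (hm : 2 * d + 3 ≤ m) (hA : Dset m d A) (hB : Dset m d B)
    (hAB : A ≤ B) : ReflTransGen (TArrow m d) A B := by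
  have hsum_nonneg : ∀ A' ≤ B, 0 ≤ ∑ j, (B j - A' j) := fun A' h =>
    sum_nonneg fun j _ => sub_nonneg.2 (h j)
  obtain ⟨N, hN⟩ : ∃ N : ℕ, ∑ j, (B j - A j) = N :=
    ⟨_, (Int.toNat_of_nonneg (hsum_nonneg A hAB)).symm⟩
  induction N using Nat.strong_induction_on generalizing A with
  | _ N ih =>
  rcases eq_or_ne A B with rfl | hne
  · exact .refl
  obtain ⟨i, hi, hslack⟩ := hA.exists_slack hm hB (Pi.lt_def.1 (lt_of_le_of_ne hAB hne)).2
  have hle : A + Evec d i ≤ B := fun j => by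
    simp only [Pi.add_apply, Evec]
    split_ifs with h
    · subst h; linarith
    · linarith [hAB j]
  have hsum : ∑ j, (B j - (A + Evec d i) j) = N - 1 := by
    simp only [Pi.add_apply, Evec, sum_sub_distrib, sum_add_distrib, sum_ite_eq', mem_univ,
      if_true, ← hN]
    ring
  have hA' := hA.add_Evec i hslack
  have := hsum_nonneg _ hle
  exact .head ⟨hA, hA', i, rfl⟩ (ih (N - 1) (by omega) hA' hle (by omega))

lemma exists_cyclicLift_eq (hA : Dset m d A) (l : ℤ) (p : Fin (d+1))
    (hx : StrictMono fun i => (A (i + p) - l) % m) :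
    ∃ e, ∀ i : Fin (d+1), cyclicLift m d A (e + i) = l + (A (i + p) - l) % m := by
  set x := fun i => (A (i + p) - l) % m
  have hm : (0 : ℤ) < m := by exact_mod_cast hA.pos
  -- `Â e = l + x 0`, and `Â (e + i) - l` for `i ≤ d` are increasing representatives in
  -- `[x 0, x 0 + m)` of the residues of `A - l`, i.e. the values of `x`
  set e : ℤ := p + (d+1) * (-((A p - l) / m))
  set s := fun i : Fin (d+1) => cyclicLift m d A (e + i) - l
  have hs : StrictMono s := fun i j hij =>
    sub_lt_sub_right (hA.strictMono_cyclicLift (by simpa using hij)) l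
  have hs0 : s 0 = x 0 := by
    have := Int.emod_add_mul_ediv (A p - l) m
    simp only [s, x, e, Fin.val_zero, Nat.cast_zero, add_zero, zero_add, cyclicLift_val_add_mul]
    linarith
  have hs_mem : ∀ i, s i ∈ image x univ := by
    intro i
    obtain ⟨j, k, hjk⟩ := exists_eq_val_add_mul d (e + i)
    refine mem_image.2 ⟨j - p, mem_univ _, ?_⟩
    have hxj : x (j - p) = (A j - l) % m := by simp [x]
    have hlo : x 0 ≤ x (j - p) := hx.monotone (Fin.zero_le _)
    have hhi : x (j - p) < m := Int.emod_lt_of_pos _ hm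
    have hx0 : 0 ≤ x 0 := Int.emod_nonneg _ hm.ne'
    have hsi : s 0 ≤ s i := hs.monotone (Fin.zero_le _)
    have hsi' : s i < s 0 + m := by
      have := hA.strictMono_cyclicLift (show e + i < e + (d+1) * 1 by have := i.is_lt; omega)
      simp only [s, Fin.val_zero, Nat.cast_zero, add_zero]
      rw [cyclicLift_add_mul, mul_one] at this
      linarith
    have hdvd : (m : ℤ) ∣ x (j - p) - s i := by
      have := Int.emod_add_mul_ediv (A j - l) m
      refine ⟨-((A j - l) / m + k), ?_⟩
      simp only [s, hjk, cyclicLift_val_add_mul, hxj]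
      linear_combination this
    have := Int.eq_zero_of_abs_lt_dvd hdvd (abs_lt.2 ⟨by linarith, by linarith⟩)
    linarith
  have hcard : (image x univ).card = d + 1 := by
    rw [card_image_of_injective _ hx.injective, card_univ, Fintype.card_fin]
  have hsx : s = x := (orderEmbOfFin_unique hcard hs_mem hs).trans
    (orderEmbOfFin_unique hcard (fun i => mem_image_of_mem x (mem_univ i)) hx).symm
  exact ⟨e, fun i => by linarith [congrFun hsx i]⟩

lemma exists_interleave (hA : Dset m d A) (hB : Dset m d B)
    (h : Intertw m d (fun j => pimod m (A j)) (fun j => pimod m (B j))) :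
    ∃ c, ∀ t, cyclicLift m d A t < cyclicLift m d B (t + c) ∧
      cyclicLift m d B (t + c) < cyclicLift m d A (t + 1) := by
  obtain ⟨l, p, q, h1, h2⟩ := h
  have hred : ∀ a, (pimod m a - l) % m = (a - l) % m := fun a => (pimod_modEq m a).sub_right l
  simp only [hred] at h1 h2
  obtain ⟨eA, heA⟩ := hA.exists_cyclicLift_eq l p
    (Fin.strictMono_iff_lt_succ.2 fun i => (h1 i.castSucc).trans (h2 i))
  obtain ⟨eB, heB⟩ := hB.exists_cyclicLift_eq l q
    (Fin.strictMono_iff_lt_succ.2 fun i => (h2 i).trans (h1 i.succ))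
  have hfin : ∀ i : Fin (d+1), cyclicLift m d A (eA + i) < cyclicLift m d B (eB + i) ∧
      cyclicLift m d B (eB + i) < cyclicLift m d A (eA + i + 1) := by
    intro i
    rw [heA, heB]
    refine ⟨by linarith [h1 i], ?_⟩
    cases i using Fin.lastCases with
    | last =>
      have hm : (0 : ℤ) < m := by exact_mod_cast hA.pos
      have := cyclicLift_add_mul (m := m) A (eA + ((0 : Fin (d+1)) : ℕ)) 1
      rw [heA, show eA + ((0 : Fin (d+1)) : ℕ) + (d+1) * 1 = eA + (Fin.last d : ℕ) + 1 by
        simp only [Fin.val_zero, Fin.val_last, Nat.cast_zero]; ring] at this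
      rw [this]
      linarith [Int.emod_lt_of_pos (B (Fin.last d + q) - l) hm,
        Int.emod_nonneg (A (0 + p) - l) hm.ne']
    | cast i =>
      rw [show eA + (i.castSucc : ℕ) + 1 = eA + (i.succ : ℕ) by
        simp only [Fin.val_castSucc, Fin.val_succ, Nat.cast_succ]; ring, heA]
      linarith [h2 i]
  refine ⟨eB - eA, fun t => ?_⟩
  obtain ⟨i, k, ht⟩ := exists_eq_val_add_mul d (t - eA)
  rw [show t + (eB - eA) = eB + i + (d+1) * k by omega,
    show t + 1 = eA + i + 1 + (d+1) * k by omega, show t = eA + i + (d+1) * k by omega,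
    cyclicLift_add_mul, cyclicLift_add_mul, cyclicLift_add_mul]
  constructor <;> linarith [hfin i]

lemma lt_or_lt_of_interleave (hA : Dset m d A) (c : ℤ)
    (h : ∀ t, cyclicLift m d A t < cyclicLift m d B (t + c) ∧
      cyclicLift m d B (t + c) < cyclicLift m d A (t + 1)) :
    (∀ j, A j < B j) ∨ (∀ j, B j < A j) := by
  rcases le_or_gt c 0 with hc | hc
  · refine .inl fun j => ?_
    have := (h (j - c)).1
    rw [sub_add_cancel, cyclicLift_val] at this
    calc A j = cyclicLift m d A j := (cyclicLift_val A j).symm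
      _ ≤ cyclicLift m d A (j - c) := hA.strictMono_cyclicLift.monotone (by linarith)
      _ < B j := this
  · refine .inr fun j => ?_
    have := (h (j - c)).2
    rw [sub_add_cancel, cyclicLift_val] at this
    calc B j < cyclicLift m d A (j - c + 1) := this
      _ ≤ cyclicLift m d A j := hA.strictMono_cyclicLift.monotone (by linarith)
      _ = A j := cyclicLift_val A j

lemma lt_or_lt_of_intertw (hA : Dset m d A) (hB : Dset m d B)
    (h : Intertw m d (fun j => pimod m (A j)) (fun j => pimod m (B j))) :
    (∀ j, A j < B j) ∨ (∀ j, B j < A j) :=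
  let ⟨c, hc⟩ := hA.exists_interleave hB h
  hA.lt_or_lt_of_interleave c hc

end Dset

structure IsSlice (m d : ℕ) (S : Set (Fin (d+1) → ℤ)) : Prop where
  dset : ∀ X ∈ S, Dset m d X
  existsUnique_add_const_mem : ∀ A, Dset m d A → ∃! k : ℤ, (fun j => A j + k) ∈ S
  convex : ∀ A ∈ S, ∀ B ∈ S, ∀ X,
    ReflTransGen (TArrow m d) A X → ReflTransGen (TArrow m d) X B → X ∈ S

namespace IsSlice

variable {S : Set (Fin (d+1) → ℤ)} {A B : Fin (d+1) → ℤ}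

lemma eq_zero_of_add_const_mem (hS : IsSlice m d S) (hA : A ∈ S) {c : ℤ}
    (hc : (fun j => A j + c) ∈ S) : c = 0 :=
  (hS.existsUnique_add_const_mem A (hS.dset A hA)).unique hc (by simpa using hA)

lemma not_forall_lt (hS : IsSlice m d S) (hA : A ∈ S) (hB : B ∈ S) : ¬ ∀ j, A j < B j := by
  intro hlt
  have hA' := hS.dset A hA
  have hB' := hS.dset B hB
  by_cases hm : 2 * d + 3 ≤ m
  · have hA1 := hA'.add_const 1
    have hA1S : (fun j => A j + 1) ∈ S := hS.convex A hA B hB _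
      (hA'.reflTransGen_tArrow_of_le hm hA1 fun j => by simp)
      (hA1.reflTransGen_tArrow_of_le hm hB' fun j => by simpa using hlt j)
    exact one_ne_zero (hS.eq_zero_of_add_const_mem hA hA1S)
  · have hBA : (fun j => A j + (B 0 - A 0)) = B := funext fun j => by
      rw [hA'.eq_add_two_mul (by omega), hB'.eq_add_two_mul (by omega) j]; ring
    have := hS.eq_zero_of_add_const_mem hA (hBA ▸ hB)
    linarith [hlt 0]

lemma not_intertw (hS : IsSlice m d S) (hA : A ∈ S) (hB : B ∈ S) :
    ¬ Intertw m d (fun j => pimod m (A j)) (fun j => pimod m (B j)) := fun h =>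
  ((hS.dset A hA).lt_or_lt_of_intertw (hS.dset B hB) h).elim (hS.not_forall_lt hA hB)
    (hS.not_forall_lt hB hA)

lemma card_eq (hS : IsSlice m d S) : Nat.card S = Nat.card (Quotient (nuSetoid m d)) := by
  refine Nat.card_eq_of_bijective (fun A => Quotient.mk _ ⟨A, hS.dset A A.2⟩) ⟨?_, ?_⟩
  · rintro ⟨A, hA⟩ ⟨B, hB⟩ hAB
    obtain ⟨k, hk⟩ := Quotient.exact hAB
    have hBA : (fun j => A j + k) = B := funext fun j => (hk j).symm
    have := hS.eq_zero_of_add_const_mem hA (hBA ▸ hB)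
    subst this
    simp only [add_zero] at hBA
    exact Subtype.ext hBA
  · rintro ⟨C, hC⟩
    obtain ⟨k, hk, -⟩ := hS.existsUnique_add_const_mem C hC
    exact ⟨⟨_, hk⟩, Quotient.sound ⟨-k, fun j => by simp⟩⟩

end IsSlice

end

/-- If S is a slice of Q̃^{(d,n)} (one vertex from each ν_d-orbit,
and convex), then π(S_0) is a pairwise non-intertwining collection of d-simplices
whose cardinality equals the number of ν_d-orbits (hence gives a triangulation of
C(n+2d+1, 2d)). -/
theorem slice_gives_triangulation (n d : ℕ) (S : Set (Fin (d+1) → ℤ))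
    (hS : ∀ X ∈ S, Dset (n + 2*d + 1) d X)
    (horbit : ∀ A, Dset (n + 2*d + 1) d A → ∃! k : ℤ, (fun j => A j + k) ∈ S)
    (hconv : ∀ A ∈ S, ∀ B ∈ S, ∀ X,
      Relation.ReflTransGen (TArrow (n + 2*d + 1) d) A X →
      Relation.ReflTransGen (TArrow (n + 2*d + 1) d) X B → X ∈ S) :
    (∀ A ∈ S, ∀ B ∈ S, A ≠ B →
      ¬ Intertw (n + 2*d + 1) d (fun j => pimod (n + 2*d + 1) (A j))
        (fun j => pimod (n + 2*d + 1) (B j))) ∧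
    Nat.card S = Nat.card (Quotient (nuSetoid (n + 2*d + 1) d)) := by
  have hslice : IsSlice (n + 2*d + 1) d S := ⟨hS, horbit, hconv⟩
  exact ⟨fun A hA B hB _ => hslice.not_intertw hA hB, hslice.card_eq⟩
end

section
/- In the quiver Q(𝒯) of a triangulation 𝒯 of C(n+2d+1, 2d), the maximal length of a retrograde path is d. Concretely: there is no sequence A_0 → A_1 → ⋯ → A_{d+1} of elements of a pairwise non-intertwining subset of N(n+2d+1,d) in which (after cyclic reordering) each step changes exactly one coordinate, the coordinate changed decreases by one index at each step (from index d down), and each A_i ⋏-avoids the others; equivalently, if a_j < b_j < a_{j+1} for all j ∈ [d] with b_0 in the final position, then (a_0,…,a_d) and (b_0,…,b_d) are intertwining, contradicting non-intertwining. -/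
/-- `Nset m d A`: N(m,d) = Ď(m,d) ∩ [m]^{d+1}, the set of d-arcs. -/
def Nset (m d : ℕ) (A : Fin (d+1) → ℤ) : Prop :=
  Dset m d A ∧ ∀ j, 1 ≤ A j ∧ A j ≤ (m : ℤ)

/-- the maximal length of a retrograde path in Q(𝒯) is d. Core
content: if A, B are d-arcs of a pairwise non-intertwining collection with
a_i < b_i < a_{i+1} for all i ∈ {0, …, d-1} and a_d < b_d (as would result from
a retrograde path of length d+1), then A and B are intertwining — a
contradiction. -/
theorem no_retrograde_path_of_length_d_plus_one (n d : ℕ)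
    (T : Set (Fin (d+1) → ℤ))
    (hT : ∀ X ∈ T, Nset (n + 2*d + 1) d X)
    (hnon : ∀ X ∈ T, ∀ Y ∈ T, X ≠ Y → ¬ Intertw (n + 2*d + 1) d X Y)
    (A B : Fin (d+1) → ℤ) (hA : A ∈ T) (hB : B ∈ T)
    (h1 : ∀ i : Fin d, A i.castSucc < B i.castSucc ∧ B i.castSucc < A i.succ)
    (h2 : A (Fin.last d) < B (Fin.last d)) :
    False := by
  set m := n + 2*d + 1 with hm
  obtain ⟨⟨hAgap, _⟩, hAbd⟩ := hT A hA
  obtain ⟨_, hBbd⟩ := hT B hB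
  have hmono : StrictMono A := by
    rw [Fin.strictMono_iff_lt_succ]
    intro i
    have := hAgap i
    omega
  have hA0 : ∀ j, A 0 ≤ A j := fun j => hmono.monotone (Fin.zero_le j)
  have hAne : A ≠ B := by
    intro h
    rw [h] at h2
    exact lt_irrefl _ h2
  apply hnon A hA B hB hAne
  refine ⟨A 0, 0, 0, ?_, ?_⟩
  · intro i
    have hi : i + 0 = i := by simp
    rw [hi]
    have h1' : A i < B i := by
      rcases Fin.lt_or_eq_of_le (Fin.le_last i) with h | h
      · have := h1 ⟨i, h⟩
        simpa using this.1
      · rw [h]; exact h2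
    have hAm : A i ≤ (m : ℤ) := (hAbd i).2
    have hBm : B i ≤ (m : ℤ) := (hBbd i).2
    have h01 : (1 : ℤ) ≤ A 0 := (hAbd 0).1
    have h0i : A 0 ≤ A i := hA0 i
    rw [Int.emod_eq_of_lt (by omega) (by omega), Int.emod_eq_of_lt (by omega) (by omega)]
    omega
  · intro i
    have hi1 : i.castSucc + 0 = i.castSucc := by simp
    have hi2 : i.succ + 0 = i.succ := by simp
    rw [hi1, hi2]
    have h1' := (h1 i).2
    have h1'' := (h1 i).1
    have hAm : A i.succ ≤ (m : ℤ) := (hAbd i.succ).2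
    have hBm : B i.castSucc ≤ (m : ℤ) := (hBbd i.castSucc).2
    have h01 : (1 : ℤ) ≤ A 0 := (hAbd 0).1
    have h0i : A 0 ≤ A i.castSucc := hA0 i.castSucc
    rw [Int.emod_eq_of_lt (by omega) (by omega), Int.emod_eq_of_lt (by omega) (by omega)]
    omega
end
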